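/- arXiv:1209.5779 — 2 statements merged into one kernel-verified Lean document; each statement's English description precedes it below -/
import Mathlib

section
/- Assume the random variables w_k, k ∈ W, are square-integrable with mean 0 and variance σ_k², and are pairwise independent. Then for every line (i,j) the variance of the flow is Var(f_ij) = β_ij² · Σ_{k∈W} σ_k² · (π_{ik} − π_{jk} − δ_i + δ_j)². -/
open MeasureTheory ProbabilityTheory BigOperators Finset Matrix

/-!
Each potential `θ i` is the deterministic value `θbar i` plus the linear combination
`∑ k ∈ W, (π i k - δ i) * w k` of the noises, because the term `-S • α` contributes
`-δ i * ∑ k ∈ W, w k`. Hence the flow is a constant plus `∑ k ∈ W, c k * w k` with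
`c k = β i j * (π i k - π j k - δ i + δ j)`, and pairwise independence makes the variance of
that sum the sum of the variances `c k ^ 2 * σ k ^ 2`.
-/

lemma variance_const_add_sum_mul {ι Ω : Type*} [MeasurableSpace Ω] {μ : Measure Ω}
    [IsProbabilityMeasure μ] {X : ι → Ω → ℝ} {s : Finset ι}
    (hX : ∀ i ∈ s, MemLp (X i) 2 μ) (hindep : Set.Pairwise ↑s fun i j => X i ⟂ᵢ[μ] X j)
    (a : ℝ) (c : ι → ℝ) :
    Var[fun ω => a + ∑ i ∈ s, c i * X i ω; μ] = ∑ i ∈ s, c i ^ 2 * Var[X i; μ] := by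
  have hcX : ∀ i ∈ s, MemLp (c i • X i) 2 μ := fun i hi => (hX i hi).const_smul (c i)
  have hsum : (fun ω => ∑ i ∈ s, c i * X i ω) = ∑ i ∈ s, c i • X i := by
    ext ω
    simp only [Finset.sum_apply, Pi.smul_apply, smul_eq_mul]
  rw [variance_const_add (hsum ▸ (memLp_finsetSum' s hcX).aestronglyMeasurable),
    hsum, IndepFun.variance_sum hcX fun i hi j hj hij =>
      (hindep hi hj hij).comp (measurable_const_smul (c i)) (measurable_const_smul (c j))]
  exact Finset.sum_congr rfl fun i _ => variance_smul (c i) (X i) μ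

lemma mulVec_sub_sum_mul_add_apply {R ι κ : Type*} [CommRing R] [Fintype ι]
    (A : Matrix κ ι R) (v α u : ι → R) {s : Finset ι} (hu : ∀ k ∉ s, u k = 0) (i : κ) :
    (A *ᵥ fun k => v k - (∑ l ∈ s, u l) * α k + u k) i
      = (A *ᵥ v) i + ∑ k ∈ s, (A i k - (A *ᵥ α) i) * u k := by
  have hAu : (A *ᵥ u) i = ∑ k ∈ s, A i k * u k :=
    (Finset.sum_subset s.subset_univ fun k _ hk => by simp [hu k hk]).symm
  have hvec :
      (fun k => v k - (∑ l ∈ s, u l) * α k + u k) = v - (∑ l ∈ s, u l) • α + u := rfl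
  rw [hvec, mulVec_add, mulVec_sub, mulVec_smul, Pi.add_apply, Pi.sub_apply, Pi.smul_apply,
    hAu, smul_eq_mul, Finset.sum_congr rfl fun k _ => sub_mul _ _ _, Finset.sum_sub_distrib,
    ← Finset.mul_sum]
  ring

theorem flow_variance_general
    {m : ℕ}
    {Ω : Type*} [MeasureSpace Ω] [IsProbabilityMeasure (ℙ : Measure Ω)]
    (Bhat : Matrix (Fin m) (Fin m) ℝ)
    (W : Finset (Fin m))
    (w : Fin m → Ω → ℝ) (hwW : ∀ k ∉ W, w k = 0)
    (σ : Fin m → ℝ)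
    (hL2 : ∀ k ∈ W, MemLp (w k) 2 ℙ)
    (hvar : ∀ k ∈ W, variance (w k) ℙ = σ k ^ 2)
    (hindep : ∀ k ∈ W, ∀ l ∈ W, k ≠ l → IndepFun (w k) (w l) ℙ)
    (S : Ω → ℝ) (hS : ∀ ω, S ω = ∑ k ∈ W, w k ω)
    (bbar pbar α : Fin m → ℝ)
    (δ θbar : Fin (m + 1) → ℝ)
    (hδ : δ = Fin.snoc (Bhat⁻¹.mulVec α) 0)
    (hθbar : θbar = Fin.snoc (Bhat⁻¹.mulVec (bbar + pbar)) 0)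
    (π : Fin (m + 1) → Fin m → ℝ)
    (hπ : π = Fin.snoc (fun i j => Bhat⁻¹ i j) 0)
    (θ : Fin (m + 1) → Ω → ℝ)
    (hθ : ∀ ω, (fun i : Fin m => θ i.castSucc ω)
        = Bhat⁻¹.mulVec (fun i => bbar i + pbar i - S ω * α i + w i ω))
    (hθn : ∀ ω, θ (Fin.last m) ω = 0)
    (β : Fin (m + 1) → Fin (m + 1) → ℝ)
    (f : Fin (m + 1) → Fin (m + 1) → Ω → ℝ)
    (hf : ∀ i j ω, f i j ω = β i j * (θ i ω - θ j ω)) :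
    ∀ i j : Fin (m + 1),
      variance (f i j) ℙ
        = β i j ^ 2 * ∑ k ∈ W, σ k ^ 2 * (π i k - π j k - δ i + δ j) ^ 2 := by
  have hθ_eq (i : Fin (m + 1)) (ω : Ω) :
      θ i ω = θbar i + ∑ k ∈ W, (π i k - δ i) * w k ω := by
    subst hδ hθbar hπ
    induction i using Fin.lastCases with
    | last => simp [hθn]
    | cast i =>
      simp only [Fin.snoc_castSucc]
      rw [← mulVec_sub_sum_mul_add_apply _ _ _ (fun k => w k ω)
        fun k hk => congrFun (hwW k hk) ω, ← hS]
      exact congrFun (hθ ω) i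
  intro i j
  have hf_eq : f i j = fun ω => β i j * (θbar i - θbar j)
      + ∑ k ∈ W, β i j * (π i k - π j k - δ i + δ j) * w k ω := by
    ext ω
    have hsum : ∑ k ∈ W, β i j * (π i k - π j k - δ i + δ j) * w k ω
        = β i j * (∑ k ∈ W, (π i k - δ i) * w k ω
            - ∑ k ∈ W, (π j k - δ j) * w k ω) := by
      rw [← Finset.sum_sub_distrib, Finset.mul_sum]
      exact Finset.sum_congr rfl fun k _ => by ring
    rw [hf, hθ_eq i, hθ_eq j, hsum]
    ring
  rw [hf_eq, variance_const_add_sum_mul hL2 (fun k hk l hl => hindep k hk l hl), Finset.mul_sum]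
  refine Finset.sum_congr rfl fun k hk => ?_
  rw [hvar k hk]
  ring

/-- If the `w k`, `k ∈ W`, are square-integrable with mean `0` and variance
`σ k ^ 2`, and are pairwise independent, then for every line `(i,j)` the variance of the flow
is `Var (f i j) = β i j ^ 2 * ∑ k ∈ W, σ k ^ 2 * (π i k - π j k - δ i + δ j) ^ 2`. -/
theorem flow_variance
    {m : ℕ} (hm : 1 ≤ m)
    {Ω : Type*} [MeasureSpace Ω] [IsProbabilityMeasure (ℙ : Measure Ω)]
    (Bhat : Matrix (Fin m) (Fin m) ℝ) (hB : IsUnit Bhat.det)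
    (W : Finset (Fin m))
    (w : Fin m → Ω → ℝ) (hwW : ∀ k ∉ W, w k = 0)
    (σ : Fin m → ℝ)
    (hL2 : ∀ k ∈ W, MemLp (w k) 2 ℙ)
    (hmean : ∀ k ∈ W, ∫ ω, w k ω = 0)
    (hvar : ∀ k ∈ W, variance (w k) ℙ = σ k ^ 2)
    (hindep : ∀ k ∈ W, ∀ l ∈ W, k ≠ l → IndepFun (w k) (w l) ℙ)
    (S : Ω → ℝ) (hS : ∀ ω, S ω = ∑ k ∈ W, w k ω)
    (bbar pbar α : Fin m → ℝ)
    (δ θbar : Fin (m + 1) → ℝ)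
    (hδ : δ = Fin.snoc (Bhat⁻¹.mulVec α) 0)
    (hθbar : θbar = Fin.snoc (Bhat⁻¹.mulVec (bbar + pbar)) 0)
    (π : Fin (m + 1) → Fin m → ℝ)
    (hπ : π = Fin.snoc (fun i j => Bhat⁻¹ i j) 0)
    (θ : Fin (m + 1) → Ω → ℝ)
    (hθ : ∀ ω, (fun i : Fin m => θ i.castSucc ω)
        = Bhat⁻¹.mulVec (fun i => bbar i + pbar i - S ω * α i + w i ω))
    (hθn : ∀ ω, θ (Fin.last m) ω = 0)
    (β : Fin (m + 1) → Fin (m + 1) → ℝ) (hβ : ∀ i j, 0 < β i j)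
    (f : Fin (m + 1) → Fin (m + 1) → Ω → ℝ)
    (hf : ∀ i j ω, f i j ω = β i j * (θ i ω - θ j ω)) :
    ∀ i j : Fin (m + 1),
      variance (f i j) ℙ
        = β i j ^ 2 * ∑ k ∈ W, σ k ^ 2 * (π i k - π j k - δ i + δ j) ^ 2 :=
  flow_variance_general Bhat W w hwW σ hL2 hvar hindep S hS bbar pbar α δ θbar hδ hθbar π hπ θ hθ
    hθn β f hf
end

section
/- Let X be a real random variable with distribution N(μ, s²), s > 0, let f^max > 0 and 0 < ε < 1, and write η(ε) = Φ⁻¹(1−ε). (i) If P(|X| > f^max) < ε, then |μ| ≤ f^max − η(ε)·s. (ii) Conversely, if |μ| ≤ f^max − η(ε)·s, then P(|X| > f^max) ≤ 2ε. -/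
/-!
Standardizing `X`, the two tails are `P(X > f) = 1 - Φ((f - μ) / s)` and
`P(-X > f) = 1 - Φ((f + μ) / s)`, and `P(|X| > f)` lies between the larger of them and
their sum. Since `Φ` is continuous, `η ε` is a genuine preimage, `Φ (η ε) = 1 - ε`, so
monotonicity of `Φ` turns "each tail is `< ε`" into `η ε * s < f ∓ μ`, and
`η ε * s ≤ f ∓ μ` into "each tail is `≤ ε`".
-/

open MeasureTheory ProbabilityTheory Set

namespace ProbabilityTheory

lemma continuous_cdf (μ : Measure ℝ) [IsProbabilityMeasure μ] [NullSingletonClass μ] :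
    Continuous (cdf μ) := by
  refine continuous_iff_continuousAt.2 fun x ↦ ?_
  have hleft : Function.leftLim (cdf μ) x = cdf μ x := by
    have hatom := (cdf μ).measure_singleton x
    rw [measure_cdf, measure_singleton, eq_comm, ENNReal.ofReal_eq_zero, sub_nonpos] at hatom
    exact le_antisymm ((monotone_cdf μ).leftLim_le le_rfl) hatom
  have hright : Function.rightLim (cdf μ) x = cdf μ x :=
    ContinuousWithinAt.rightLim_eq ((cdf μ).right_continuous x)
  exact (monotone_cdf μ).continuousAt_iff_leftLim_eq_rightLim.2 (hleft.trans hright.symm)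

lemma exists_cdf_eq (μ : Measure ℝ) [IsProbabilityMeasure μ] [NullSingletonClass μ] {p : ℝ}
    (hp0 : 0 < p) (hp1 : p < 1) : ∃ x, cdf μ x = p :=
  mem_range_of_exists_le_of_exists_ge (continuous_cdf μ)
    ((tendsto_cdf_atBot μ).eventually_le_const hp0).exists
    ((tendsto_cdf_atTop μ).eventually_const_le hp1).exists

lemma measureReal_lt_abs_le_add {Ω : Type*} {mΩ : MeasurableSpace Ω} (P : Measure Ω)
    [IsFiniteMeasure P] (X : Ω → ℝ) (t : ℝ) :
    P.real {ω | t < |X ω|} ≤ P.real {ω | t < X ω} + P.real {ω | t < -X ω} :=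
  calc P.real {ω | t < |X ω|} ≤ P.real ({ω | t < X ω} ∪ {ω | t < -X ω}) :=
        measureReal_mono fun ω (h : t < |X ω|) ↦ show t < X ω ∨ t < -X ω from lt_abs.1 h
    _ ≤ _ := measureReal_union_le _ _

variable {Ω : Type*} {mΩ : MeasurableSpace Ω} {P : Measure Ω} {X : Ω → ℝ} {μ s : ℝ}

lemma hasLaw_standardize_gaussianReal (hX : HasLaw X (gaussianReal μ (s ^ 2).toNNReal) P)
    (hs : s ≠ 0) : HasLaw (fun ω ↦ (X ω - μ) / s) (gaussianReal 0 1) P := by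
  convert gaussianReal_div_const (gaussianReal_sub_const hX μ) s using 2
  · simp
  · ext
    simp [max_eq_left (sq_nonneg s), hs]

lemma measureReal_lt_of_hasLaw_gaussianReal
    (hX : HasLaw X (gaussianReal μ (s ^ 2).toNNReal) P) (hs : 0 < s) (t : ℝ) :
    P.real {ω | t < X ω} = 1 - cdf (gaussianReal 0 1) ((t - μ) / s) := by
  have := hX.isProbabilityMeasure
  have hZ := hasLaw_standardize_gaussianReal hX hs.ne'
  have hset : {ω | t < X ω} = {ω | (t - μ) / s < (X ω - μ) / s} := by
    ext ω
    simp [div_lt_div_iff_of_pos_right hs]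
  rw [hset, hZ.measureReal_eq (p := ((t - μ) / s < ·)) measurableSet_Ioi]
  change (gaussianReal 0 1).real (Ioi _) = _
  rw [← compl_Iic, probReal_compl_eq_one_sub measurableSet_Iic, cdf_eq_real]

lemma measureReal_lt_abs_of_hasLaw_gaussianReal
    (hX : HasLaw X (gaussianReal μ (s ^ 2).toNNReal) P) (hs : 0 < s) (t : ℝ) :
    max (1 - cdf (gaussianReal 0 1) ((t - μ) / s)) (1 - cdf (gaussianReal 0 1) ((t + μ) / s))
        ≤ P.real {ω | t < |X ω|} ∧
      P.real {ω | t < |X ω|} ≤ (1 - cdf (gaussianReal 0 1) ((t - μ) / s)) +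
        (1 - cdf (gaussianReal 0 1) ((t + μ) / s)) := by
  have := hX.isProbabilityMeasure
  have hlower : P.real {ω | t < -X ω} = 1 - cdf (gaussianReal 0 1) ((t + μ) / s) := by
    simpa only [Pi.neg_apply, sub_neg_eq_add] using
      measureReal_lt_of_hasLaw_gaussianReal (gaussianReal_neg hX) hs t
  rw [← measureReal_lt_of_hasLaw_gaussianReal hX hs t, ← hlower]
  refine ⟨max_le ?_ ?_, measureReal_lt_abs_le_add P X t⟩
  · exact measureReal_mono fun ω (h : t < X ω) ↦
      show t < |X ω| from h.trans_le (le_abs_self _)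
  · exact measureReal_mono fun ω (h : t < -X ω) ↦
      show t < |X ω| from h.trans_le (neg_le_abs _)

end ProbabilityTheory

theorem gaussian_two_sided_chance_bound_general
    {Ω : Type*} [MeasureSpace Ω]
    (X : Ω → ℝ) (μ s : ℝ) (hs : 0 < s)
    (hX : Measure.map X ℙ = gaussianReal μ (Real.toNNReal (s ^ 2)))
    (fmax ε : ℝ) (hε0 : 0 < ε) (hε1 : ε < 1)
    (Φ : ℝ → ℝ) (hΦ : ∀ x, Φ x = (gaussianReal 0 1 (Set.Iic x)).toReal)
    (η : ℝ → ℝ) (hη : ∀ r, η r = Function.invFun Φ (1 - r)) :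
    ((ℙ {ω | fmax < |X ω|}).toReal < ε → |μ| ≤ fmax - η ε * s)
    ∧ (|μ| ≤ fmax - η ε * s → (ℙ {ω | fmax < |X ω|}).toReal ≤ 2 * ε) := by
  obtain rfl : Φ = cdf (gaussianReal 0 1) := funext fun x ↦ (hΦ x).trans (cdf_eq_real _ x).symm
  have hΦη : cdf (gaussianReal 0 1) (η ε) = 1 - ε := by
    have := nullSingletonClass_gaussianReal (μ := 0) one_ne_zero
    rw [hη]
    exact Function.invFun_eq (exists_cdf_eq _ (sub_pos.2 hε1) (by linarith))
  have hlaw : HasLaw X (gaussianReal μ (s ^ 2).toNNReal) ℙ :=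
    ⟨aemeasurable_of_map_neZero (by rw [hX]; infer_instance), hX⟩
  obtain ⟨htails_le, hle_tails⟩ := measureReal_lt_abs_of_hasLaw_gaussianReal hlaw hs fmax
  rw [max_le_iff] at htails_le
  have hmono := monotone_cdf (gaussianReal 0 1)
  simp only [← measureReal_def]
  constructor
  · intro hP
    have h1 : η ε < (fmax - μ) / s := hmono.reflect_lt (by linarith)
    have h2 : η ε < (fmax + μ) / s := hmono.reflect_lt (by linarith)
    rw [lt_div_iff₀ hs] at h1 h2
    exact abs_le.2 ⟨by linarith, by linarith⟩
  · intro hμ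
    have h1 : η ε ≤ (fmax - μ) / s := by rw [le_div_iff₀ hs]; linarith [le_abs_self μ]
    have h2 : η ε ≤ (fmax + μ) / s := by rw [le_div_iff₀ hs]; linarith [neg_abs_le μ]
    linarith [hmono h1, hmono h2]

/-- Let `X ~ N(μ, s²)` with `s > 0`, `f^max > 0`, `0 < ε < 1`, and
`η ε = Φ⁻¹(1 - ε)`. (i) If `P(|X| > f^max) < ε` then `|μ| ≤ f^max - η ε * s`.
(ii) Conversely, if `|μ| ≤ f^max - η ε * s` then `P(|X| > f^max) ≤ 2ε`. -/
theorem gaussian_two_sided_chance_bound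
    {Ω : Type*} [MeasureSpace Ω] [IsProbabilityMeasure (ℙ : Measure Ω)]
    (X : Ω → ℝ) (μ s : ℝ) (hs : 0 < s)
    (hX : Measure.map X ℙ = gaussianReal μ (Real.toNNReal (s ^ 2)))
    (fmax ε : ℝ) (hfmax : 0 < fmax) (hε0 : 0 < ε) (hε1 : ε < 1)
    (Φ : ℝ → ℝ) (hΦ : ∀ x, Φ x = (gaussianReal 0 1 (Set.Iic x)).toReal)
    (η : ℝ → ℝ) (hη : ∀ r, η r = Function.invFun Φ (1 - r)) :
    ((ℙ {ω | fmax < |X ω|}).toReal < ε → |μ| ≤ fmax - η ε * s)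
    ∧ (|μ| ≤ fmax - η ε * s → (ℙ {ω | fmax < |X ω|}).toReal ≤ 2 * ε) :=
  gaussian_two_sided_chance_bound_general X μ s hs hX fmax ε hε0 hε1 Φ hΦ η hη
end
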